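/- arXiv:2409.06432 — 2 statements merged into one kernel-verified Lean document; each statement's English description precedes it below -/
import Mathlib

section
/- For every p ≥ 2 and every n ∈ ℕ, (2n+5)·Ψ(1+(2n+5)/p) + (2n+1)·Ψ(1+(2n+1)/p) − 2(2n+3)·Ψ(1+(2n+3)/p) > 0. -/
/-!
Log-convexity of `Γ` together with `log Γ (x + 1) = log Γ x + log x` gives
`Ψ (x + n) = Ψ x + ∑_{k<n} 1 / (x + k)` and `log (x + n - 1) ≤ Ψ (x + n) ≤ log (x + n)`; comparing
with `harmonic n - log n → γ` yields `Ψ (1 + x) + γ = ∑_{k ≥ 0} x / ((k + 1) (x + k + 1))`.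
Hence `a (Ψ (1 + a / p) + γ) = ∑_k a² / ((k + 1) (a + p (k + 1)))`, and every summand is strictly
convex in `a > -p`: the second difference of `a ↦ a² / (a + c)` with step `d` is
`2 c² d² / ((a + c) (a + c + d) (a + c - d))`. The `γ` terms cancel in a second difference, so the
theorem is the case `a = 2n + 3`, `d = 2`.
-/

open Real Filter Finset
open scoped Topology

/-- The Digamma function `Ψ = (ln Γ)'`. -/
noncomputable def digamma (x : ℝ) : ℝ := deriv (fun y => Real.log (Real.Gamma y)) x

lemma differentiableAt_log_Gamma {x : ℝ} (hx : 0 < x) :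
    DifferentiableAt ℝ (fun y => log (Gamma y)) x :=
  (differentiableAt_Gamma fun m => ((neg_nonpos.2 m.cast_nonneg).trans_lt hx).ne').log
    (Gamma_pos_of_pos hx).ne'

lemma log_Gamma_add_one {x : ℝ} (hx : 0 < x) : log (Gamma (x + 1)) = log (Gamma x) + log x := by
  rw [Gamma_add_one hx.ne', log_mul hx.ne' (Gamma_pos_of_pos hx).ne', add_comm]

lemma digamma_add_one {x : ℝ} (hx : 0 < x) : digamma (x + 1) = digamma x + 1 / x := by
  have hrec : (fun y => log (Gamma (y + 1))) =ᶠ[𝓝 x] fun y => log (Gamma y) + log y := by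
    filter_upwards [eventually_gt_nhds hx] with y hy using log_Gamma_add_one hy
  rw [digamma, ← deriv_comp_add_const, hrec.deriv_eq,
    deriv_fun_add (differentiableAt_log_Gamma hx) (differentiableAt_log hx.ne'), deriv_log, one_div]
  rfl

lemma digamma_add_nat {x : ℝ} (hx : 0 < x) (n : ℕ) :
    digamma (x + n) = digamma x + ∑ k ∈ range n, 1 / (x + k) := by
  induction n with
  | zero => simp
  | succ n ih =>
    rw [Nat.cast_succ, ← add_assoc, digamma_add_one (by positivity), ih, sum_range_succ, add_assoc]

lemma log_le_digamma_add_one {x : ℝ} (hx : 0 < x) : log x ≤ digamma (x + 1) := by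
  have h := convexOn_log_Gamma.slope_le_deriv (Set.mem_Ioi.2 hx) (Set.mem_Ioi.2 (by linarith))
    (lt_add_one x) (differentiableAt_log_Gamma (by linarith))
  rwa [slope_def_field, add_sub_cancel_left, div_one, Function.comp_apply, Function.comp_apply,
    log_Gamma_add_one hx, add_sub_cancel_left] at h

lemma digamma_le_log {x : ℝ} (hx : 0 < x) : digamma x ≤ log x := by
  have h := convexOn_log_Gamma.deriv_le_slope (Set.mem_Ioi.2 hx) (Set.mem_Ioi.2 (by linarith))
    (lt_add_one x) (differentiableAt_log_Gamma hx)
  rwa [slope_def_field, add_sub_cancel_left, div_one, Function.comp_apply, Function.comp_apply,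
    log_Gamma_add_one hx, add_sub_cancel_left] at h

lemma tendsto_digamma_add_nat_sub_log {x : ℝ} (hx : 0 < x) :
    Tendsto (fun n : ℕ => digamma (x + n) - log n) atTop (𝓝 0) := by
  have hlog (c : ℝ) : Tendsto (fun n : ℕ => log (n + c) - log n) atTop (𝓝 0) :=
    (tendsto_log_comp_add_sub_log c).comp tendsto_natCast_atTop_atTop
  refine tendsto_of_tendsto_of_tendsto_of_le_of_le' (hlog (x - 1)) (hlog x) ?_ ?_
  · filter_upwards [eventually_ge_atTop 1] with n hn
    have hn' : (1 : ℝ) ≤ n := by exact_mod_cast hn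
    have h := log_le_digamma_add_one (x := n + (x - 1)) (by linarith)
    rw [show (n : ℝ) + (x - 1) + 1 = x + n by ring] at h
    exact sub_le_sub_right h _
  · filter_upwards with n
    rw [add_comm (n : ℝ)]
    exact sub_le_sub_right (digamma_le_log (by positivity)) _

lemma tendsto_sum_range_digamma_one_add {x : ℝ} (hx : -1 < x) :
    Tendsto (fun n => ∑ k ∈ range n, x / ((k + 1) * (x + k + 1))) atTop
      (𝓝 (digamma (1 + x) + eulerMascheroniConstant)) := by
  have hy : 0 < 1 + x := by linarith
  have hpartial (n : ℕ) : ∑ k ∈ range n, x / ((k + 1) * (x + k + 1)) =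
      digamma (1 + x) + (harmonic n - log n) - (digamma (1 + x + n) - log n) := by
    have hterm (k : ℕ) : x / ((k + 1) * (x + k + 1)) = 1 / (k + 1) - 1 / (1 + x + k) := by
      have : (0 : ℝ) < x + k + 1 := by linarith [k.cast_nonneg (α := ℝ)]
      field_simp
      ring
    simp only [hterm, sum_sub_distrib, digamma_add_nat hy, harmonic, one_div]
    push_cast
    ring
  simp only [hpartial]
  simpa using (tendsto_const_nhds.add tendsto_harmonic_sub_log).sub
    (tendsto_digamma_add_nat_sub_log hy)

theorem hasSum_digamma_one_add {x : ℝ} (hx : -1 < x) :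
    HasSum (fun k : ℕ => x / ((k + 1) * (x + k + 1)))
      (digamma (1 + x) + eulerMascheroniConstant) := by
  have hT := tendsto_sum_range_digamma_one_add hx
  have hden (k : ℕ) : 0 < ((k : ℝ) + 1) * (x + k + 1) := by
    have : (0 : ℝ) < x + k + 1 := by linarith [k.cast_nonneg (α := ℝ)]
    positivity
  -- all terms have the sign of `x`, so the partial sums determine the sum
  rcases le_total 0 x with h0 | h0
  · exact (hasSum_iff_tendsto_nat_of_nonneg (fun k => div_nonneg h0 (hden k).le) _).2 hT
  · have h := (hasSum_iff_tendsto_nat_of_nonneg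
      (fun k => neg_nonneg.2 (div_nonpos_of_nonpos_of_nonneg h0 (hden k).le)) _).2
      (by simpa only [sum_neg_distrib] using hT.neg)
    simpa using h.neg

lemma sq_div_add_second_diff_pos {a c d : ℝ} (hc : 0 < c) (hd : 0 < d) (had : 0 < a - d + c) :
    0 < (a + d) ^ 2 / (a + d + c) + (a - d) ^ 2 / (a - d + c) - 2 * (a ^ 2 / (a + c)) := by
  have h₁ : 0 < a + c := by linarith
  have h₂ : 0 < a + d + c := by linarith
  have hid : (a + d) ^ 2 / (a + d + c) + (a - d) ^ 2 / (a - d + c) - 2 * (a ^ 2 / (a + c)) =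
      2 * c ^ 2 * d ^ 2 / ((a + c) * (a + d + c) * (a - d + c)) := by
    field_simp
    ring
  rw [hid]
  positivity

theorem mul_digamma_one_add_div_second_diff_pos {p a d : ℝ} (hp : 0 < p) (hd : 0 < d)
    (had : -p < a - d) :
    0 < (a + d) * digamma (1 + (a + d) / p) + (a - d) * digamma (1 + (a - d) / p)
      - 2 * a * digamma (1 + a / p) := by
  have hx {b : ℝ} (hb : -p < b) : -1 < b / p := by
    rw [lt_div_iff₀ hp]
    linarith
  have hS := (((hasSum_digamma_one_add (hx (b := a + d) (by linarith))).mul_left (a + d)).add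
    ((hasSum_digamma_one_add (hx had)).mul_left (a - d))).sub
    ((hasSum_digamma_one_add (hx (b := a) (by linarith))).mul_left a |>.mul_left 2)
  have hterm (k : ℕ) : 0 < (a + d) * ((a + d) / p / ((k + 1) * ((a + d) / p + k + 1)))
      + (a - d) * ((a - d) / p / ((k + 1) * ((a - d) / p + k + 1)))
      - 2 * (a * (a / p / ((k + 1) * (a / p + k + 1)))) := by
    have hk : (0 : ℝ) < k + 1 := by positivity
    have hc : 0 < a - d + p * (k + 1) := by nlinarith [k.cast_nonneg (α := ℝ)]
    have h := div_pos (sq_div_add_second_diff_pos (mul_pos hp hk) hd hc) hk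
    have hpiece {b : ℝ} (hb : 0 < b + p * (k + 1)) :
        b * (b / p / ((k + 1) * (b / p + k + 1))) = b ^ 2 / (b + p * (k + 1)) / (k + 1) := by
      rw [show b / p + k + 1 = (b + p * (k + 1)) / p by field_simp; ring]
      field_simp
    rw [hpiece (b := a + d) (by linarith), hpiece hc, hpiece (b := a) (by linarith)]
    exact h.trans_eq (by ring)
  have := hasSum_lt (fun k => (hterm k).le) (hterm 0) hasSum_zero hS
  linarith

theorem stmt6 (p : ℝ) (hp : 2 ≤ p) (n : ℕ) :
    0 < (2 * (n : ℝ) + 5) * digamma (1 + (2 * (n : ℝ) + 5) / p)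
        + (2 * (n : ℝ) + 1) * digamma (1 + (2 * (n : ℝ) + 1) / p)
        - 2 * (2 * (n : ℝ) + 3) * digamma (1 + (2 * (n : ℝ) + 3) / p) := by
  have h := mul_digamma_one_add_div_second_diff_pos (p := p) (a := 2 * n + 3) (d := 2)
    (by linarith) two_pos (by linarith [n.cast_nonneg (α := ℝ)])
  have e₁ : (2 * n + 3 : ℝ) + 2 = 2 * n + 5 := by ring
  have e₂ : (2 * n + 3 : ℝ) - 2 = 2 * n + 1 := by ring
  rwa [e₁, e₂] at h
end

section
/- For every p ≥ 2 and every s > 0, |∫₀^∞ sin(s·r)·r·exp(−r^p) dr − (sin(s) − s·cos(s))/s²| ≤ 1.016/p. -/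
/-!
Subtracting `∫₀¹ sin (s r) r dr = (sin s - s cos s) / s²`, the error is at most
`∫₀^∞ r h(r^p) dr` with `h(u) = |e^{-u} - 1_{u ≤ 1}|` (`expDefect`). The substitution
`u = r^p` turns this into `p⁻¹ ∫₀^∞ u^{a-1} h(u) du` with `a = 2/p ∈ (0, 1]`, and the
weighted AM-GM inequality `u^{a-1} ≤ (1 - a) u⁻¹ + a` bounds it by a convex combination of
`∫ h = 2/e` and `∫ h(u)/u du = Ein(1) + E₁(1) ≈ 1.015984`. The Taylor series bounds `Ein(1)`;
`E₁(1)` is at most `G(1)/e` for any `G` with `G - G' ≥ 1/u` on `[1, ∞)`, and a convergent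
of the continued fraction of `e^u E₁(u)` is such a `G`, with `G(1)/e - E₁(1) < 1.2·10⁻⁵`.
-/

open Real MeasureTheory Set Filter Topology
open Finset (range)

theorem integral_sin_const_mul_mul_id {s : ℝ} (hs : s ≠ 0) :
    ∫ r in (0 : ℝ)..1, sin (s * r) * r = (sin s - s * cos s) / s ^ 2 := by
  have hderiv : ∀ r ∈ uIcc (0 : ℝ) 1,
      HasDerivAt (fun r => (sin (s * r) - s * r * cos (s * r)) / s ^ 2) (sin (s * r) * r) r := by
    intro r _
    have hlin : HasDerivAt (fun r => s * r) s r := by simpa using (hasDerivAt_id r).const_mul s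
    refine (((hlin.sin).sub (hlin.mul hlin.cos)).div_const (s ^ 2)).congr_deriv ?_
    field_simp
    ring
  rw [intervalIntegral.integral_eq_sub_of_hasDerivAt hderiv
    ((by fun_prop : Continuous fun r => sin (s * r) * r).intervalIntegrable _ _)]
  simp

section ChangeOfVariables

variable {p : ℝ}

theorem rpow_sub_one_mul_rpow_rpow {x : ℝ} (hx : 0 < x) (hp : p ≠ 0) (s : ℝ) :
    x ^ (p - 1) * (x ^ p) ^ ((s + 1) / p - 1) = x ^ s := by
  rw [← rpow_mul hx.le, ← rpow_add hx]
  congr 1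
  field_simp
  ring

theorem integrableOn_Ioi_rpow_mul_comp_rpow_iff (f : ℝ → ℝ) (hp : p ≠ 0) (s : ℝ) :
    IntegrableOn (fun r => r ^ s * f (r ^ p)) (Ioi 0) ↔
      IntegrableOn (fun u => u ^ ((s + 1) / p - 1) * f u) (Ioi 0) := by
  rw [← integrableOn_Ioi_comp_rpow_iff' (fun u => u ^ ((s + 1) / p - 1) * f u) hp]
  refine integrableOn_congr_fun (fun x (hx : 0 < x) => ?_) measurableSet_Ioi
  rw [smul_eq_mul, ← mul_assoc, rpow_sub_one_mul_rpow_rpow hx hp]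

theorem integral_Ioi_rpow_mul_comp_rpow (f : ℝ → ℝ) (hp : 0 < p) (s : ℝ) :
    ∫ r in Ioi 0, r ^ s * f (r ^ p) = p⁻¹ * ∫ u in Ioi 0, u ^ ((s + 1) / p - 1) * f u := by
  rw [← integral_comp_rpow_Ioi_of_pos (g := fun u => u ^ ((s + 1) / p - 1) * f u) hp,
    ← integral_const_mul]
  refine setIntegral_congr_fun measurableSet_Ioi fun x (hx : 0 < x) => ?_
  rw [smul_eq_mul, ← rpow_sub_one_mul_rpow_rpow hx hp.ne' s]
  field_simp

end ChangeOfVariables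

theorem rpow_sub_one_le {a u : ℝ} (ha0 : 0 ≤ a) (ha1 : a ≤ 1) (hu : 0 < u) :
    u ^ (a - 1) ≤ (1 - a) * u⁻¹ + a := by
  have h := geom_mean_le_arith_mean2_weighted (sub_nonneg.2 ha1) ha0 (inv_nonneg.2 hu.le)
    zero_le_one (sub_add_cancel 1 a)
  rwa [one_rpow, mul_one, mul_one, inv_rpow hu.le, ← rpow_neg hu.le, neg_sub] at h

section Interpolation

variable {f : ℝ → ℝ} {a : ℝ}

theorem integrableOn_rpow_sub_one_mul (hf : IntegrableOn f (Ioi 0))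
    (hf' : IntegrableOn (fun u => f u / u) (Ioi 0)) (ha0 : 0 ≤ a) (ha1 : a ≤ 1) :
    IntegrableOn (fun u => u ^ (a - 1) * f u) (Ioi 0) := by
  refine ((hf'.norm.const_mul (1 - a)).add (hf.norm.const_mul a)).mono'
    ((measurable_id.pow_const _).aestronglyMeasurable.mul hf.1) ?_
  filter_upwards [ae_restrict_mem measurableSet_Ioi] with u (hu : 0 < u)
  rw [Pi.add_apply, norm_mul, Real.norm_of_nonneg (rpow_nonneg hu.le _), norm_div,
    Real.norm_of_nonneg hu.le]
  calc u ^ (a - 1) * ‖f u‖ ≤ ((1 - a) * u⁻¹ + a) * ‖f u‖ := by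
        gcongr; exact rpow_sub_one_le ha0 ha1 hu
    _ = (1 - a) * (‖f u‖ / u) + a * ‖f u‖ := by ring

theorem setIntegral_rpow_sub_one_mul_le (hf0 : ∀ u ∈ Ioi (0 : ℝ), 0 ≤ f u)
    (hf : IntegrableOn f (Ioi 0)) (hf' : IntegrableOn (fun u => f u / u) (Ioi 0))
    (ha0 : 0 ≤ a) (ha1 : a ≤ 1) :
    ∫ u in Ioi 0, u ^ (a - 1) * f u ≤
      (1 - a) * (∫ u in Ioi 0, f u / u) + a * ∫ u in Ioi 0, f u := by
  rw [← integral_const_mul, ← integral_const_mul, ← integral_add (hf'.const_mul _)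
    (hf.const_mul _)]
  refine setIntegral_mono_on (integrableOn_rpow_sub_one_mul hf hf' ha0 ha1)
    ((hf'.const_mul _).add (hf.const_mul _)) measurableSet_Ioi fun u hu => ?_
  calc u ^ (a - 1) * f u ≤ ((1 - a) * u⁻¹ + a) * f u := by
        gcongr
        · exact hf0 u hu
        · exact rpow_sub_one_le ha0 ha1 hu
    _ = (1 - a) * (f u / u) + a * f u := by ring

end Interpolation

theorem one_sub_exp_neg_le (k : ℕ) {u : ℝ} (hu0 : 0 ≤ u) (hu1 : u ≤ 1) :
    1 - exp (-u) ≤ u * (∑ m ∈ range k, (-1) ^ m * u ^ m / (m + 1).factorial +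
      u ^ k * ((k + 2) / ((k + 1).factorial * (k + 1)))) := by
  have h := Real.exp_bound (x := -u) (by rwa [abs_neg, abs_of_nonneg hu0]) k.succ_pos
  rw [abs_neg, abs_of_nonneg hu0] at h
  have hsum : ∑ m ∈ range (k + 1), (-u) ^ m / m.factorial =
      1 - u * ∑ m ∈ range k, (-1) ^ m * u ^ m / (m + 1).factorial := by
    rw [Finset.sum_range_succ', Finset.mul_sum, sub_eq_add_neg, ← Finset.sum_neg_distrib,
      add_comm, pow_zero, Nat.factorial_zero, Nat.cast_one, div_one]
    congr 1
    exact Finset.sum_congr rfl fun m _ => by rw [neg_pow u]; ring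
  simp only [Nat.succ_eq_add_one, hsum] at h
  push_cast at h
  calc 1 - exp (-u) ≤ u * ∑ m ∈ range k, (-1) ^ m * u ^ m / (m + 1).factorial +
        u ^ (k + 1) * ((k + 1 + 1) / ((k + 1).factorial * (k + 1))) := by
        linarith [neg_le_of_abs_le h]
    _ = _ := by ring

theorem integrableOn_one_sub_exp_neg_div (a : ℝ) :
    IntegrableOn (fun u => (1 - exp (-u)) / u) (Ioc 0 a) := by
  refine (integrableOn_const measure_Ioc_lt_top.ne (C := (1 : ℝ))).mono'
    (by fun_prop : Measurable fun u : ℝ => (1 - exp (-u)) / u).aestronglyMeasurable ?_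
  filter_upwards [ae_restrict_mem measurableSet_Ioc] with u hu
  have h1 : 0 ≤ 1 - exp (-u) := by simp [hu.1.le]
  rw [norm_div, Real.norm_of_nonneg h1, Real.norm_of_nonneg hu.1.le, div_le_one hu.1]
  linarith [add_one_le_exp (-u)]

theorem integral_one_sub_exp_neg_div_le (k : ℕ) :
    ∫ u in (0 : ℝ)..1, (1 - exp (-u)) / u ≤
      ∑ m ∈ range k, (-1 : ℝ) ^ m / ((m + 1) * (m + 1).factorial) +
        (k + 2) / ((k + 1).factorial * (k + 1) ^ 2) := by
  have hq : ∫ u in (0 : ℝ)..1, (∑ m ∈ range k, (-1) ^ m * u ^ m / (m + 1).factorial +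
      u ^ k * ((k + 2) / ((k + 1).factorial * (k + 1)))) =
      ∑ m ∈ range k, (-1 : ℝ) ^ m / ((m + 1) * (m + 1).factorial) +
        (k + 2) / ((k + 1).factorial * (k + 1) ^ 2) := by
    rw [intervalIntegral.integral_add, intervalIntegral.integral_finsetSum]
    · simp only [intervalIntegral.integral_div, intervalIntegral.integral_const_mul,
        intervalIntegral.integral_mul_const, integral_pow]
      norm_num
      congr 1
      · exact Finset.sum_congr rfl fun m _ => by field_simp
      · field_simp
    all_goals intros; exact (by fun_prop : Continuous _).intervalIntegrable _ _
  rw [← hq]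
  refine intervalIntegral.integral_mono_on_of_le_Ioo zero_le_one ?_ ?_ fun u hu => ?_
  · exact (intervalIntegrable_iff_integrableOn_Ioc_of_le zero_le_one).2
      (integrableOn_one_sub_exp_neg_div 1)
  · exact (by fun_prop : Continuous _).intervalIntegrable _ _
  · rw [div_le_iff₀' hu.1]
    exact one_sub_exp_neg_le k hu.1.le hu.2.le

theorem integrableOn_exp_neg_div_Ioi {a : ℝ} (ha : 0 < a) :
    IntegrableOn (fun u => exp (-u) / u) (Ioi a) := by
  refine ((integrableOn_exp_neg_Ioi a).const_mul a⁻¹).mono'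
    (by fun_prop : Measurable fun u : ℝ => exp (-u) / u).aestronglyMeasurable ?_
  filter_upwards [ae_restrict_mem measurableSet_Ioi] with u hu
  rw [norm_div, Real.norm_of_nonneg (exp_pos _).le, Real.norm_of_nonneg (ha.trans hu).le,
    div_eq_inv_mul]
  gcongr
  exact le_of_lt hu

theorem setIntegral_exp_neg_div_le_of_hasDerivAt {G G' : ℝ → ℝ}
    (hG : ∀ u ∈ Ici (1 : ℝ), HasDerivAt G (G' u) u)
    (hmaj : ∀ u ∈ Ioi (1 : ℝ), u⁻¹ ≤ G u - G' u)
    (hint : IntegrableOn (fun u => (G u - G' u) * exp (-u)) (Ioi 1))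
    (hlim : Tendsto (fun u => G u * exp (-u)) atTop (𝓝 0)) :
    ∫ u in Ioi (1 : ℝ), exp (-u) / u ≤ G 1 * exp (-1) := by
  have hftc : ∫ u in Ioi (1 : ℝ), (G u - G' u) * exp (-u) = G 1 * exp (-1) := by
    have h := integral_Ioi_of_hasDerivAt_of_tendsto' (f := fun u => -(G u * exp (-u)))
      (fun u hu => ?_) hint (by simpa using hlim.neg)
    · simpa using h
    · exact ((hG u hu).mul (hasDerivAt_neg u).exp).neg.congr_deriv (by ring)
  rw [← hftc]
  refine setIntegral_mono_on (integrableOn_exp_neg_div_Ioi one_pos) hint measurableSet_Ioi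
    fun u hu => ?_
  rw [div_eq_inv_mul]
  exact mul_le_mul_of_nonneg_right (hmaj u hu) (exp_pos _).le

section ExpIntegral

open Polynomial

/- The convergent of `e^u E₁(u) = 1/(u + 1/(1 + 1/(u + 2/(1 + 2/(u + ⋯)))))` with 21 partial
quotients; the constant `144850083840000` below is `10! · 11!`. -/
noncomputable def expIntConvNum : ℝ[X] :=
  3628800 + 80627040 * X + 184386240 * X ^ 2 + 150023520 * X ^ 3 + 58603440 * X ^ 4 +
    12518100 * X ^ 5 + 1553664 * X ^ 6 + 114064 * X ^ 7 + 4842 * X ^ 8 + 109 * X ^ 9 + X ^ 10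

noncomputable def expIntConvDen : ℝ[X] :=
  X * (39916800 + 199584000 * X + 299376000 * X ^ 2 + 199584000 * X ^ 3 + 69854400 * X ^ 4 +
    13970880 * X ^ 5 + 1663200 * X ^ 6 + 118800 * X ^ 7 + 4950 * X ^ 8 + 110 * X ^ 9 + X ^ 10)

noncomputable def expIntConv (u : ℝ) : ℝ := expIntConvNum.eval u / expIntConvDen.eval u

theorem expIntConv_derivative_identity :
    X * (expIntConvNum * expIntConvDen - derivative expIntConvNum * expIntConvDen +
      expIntConvNum * derivative expIntConvDen) = expIntConvDen ^ 2 + 144850083840000 * X := by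
  simp only [expIntConvNum, expIntConvDen, derivative_add, derivative_mul, derivative_X_pow,
    derivative_X, derivative_ofNat, C_eq_natCast]
  norm_num
  ring

theorem expIntConvNum_nonneg {u : ℝ} (hu : 0 ≤ u) : 0 ≤ expIntConvNum.eval u := by
  simp only [expIntConvNum, eval_add, eval_mul, eval_pow, eval_X, eval_ofNat]
  positivity

theorem le_expIntConvDen {u : ℝ} (hu : 0 ≤ u) : u ≤ expIntConvDen.eval u := by
  simp only [expIntConvDen, eval_add, eval_mul, eval_pow, eval_X, eval_ofNat]
  refine le_mul_of_one_le_right hu ?_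
  linarith [pow_nonneg hu 2, pow_nonneg hu 3, pow_nonneg hu 4, pow_nonneg hu 5, pow_nonneg hu 6,
    pow_nonneg hu 7, pow_nonneg hu 8, pow_nonneg hu 9, pow_nonneg hu 10]

theorem mul_expIntConvNum_le {u : ℝ} (hu : 0 ≤ u) :
    u * expIntConvNum.eval u ≤ expIntConvDen.eval u := by
  simp only [expIntConvNum, expIntConvDen, eval_add, eval_mul, eval_pow, eval_X, eval_ofNat]
  refine mul_le_mul_of_nonneg_left ?_ hu
  linarith [pow_nonneg hu 2, pow_nonneg hu 3, pow_nonneg hu 4, pow_nonneg hu 5, pow_nonneg hu 6,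
    pow_nonneg hu 7, pow_nonneg hu 8, pow_nonneg hu 9, pow_nonneg hu 10]

theorem hasDerivAt_expIntConv {u : ℝ} (hu : 0 < u) :
    HasDerivAt expIntConv
      (expIntConv u - u⁻¹ - 144850083840000 / expIntConvDen.eval u ^ 2) u := by
  have hD : 0 < expIntConvDen.eval u := hu.trans_le (le_expIntConvDen hu.le)
  have hcas := congrArg (eval u) expIntConv_derivative_identity
  simp only [eval_mul, eval_add, eval_sub, eval_pow, eval_X, eval_ofNat] at hcas
  refine ((expIntConvNum.hasDerivAt u).div (expIntConvDen.hasDerivAt u) hD.ne').congr_deriv ?_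
  rw [expIntConv]
  field_simp
  linear_combination -hcas

theorem expIntConv_one : expIntConv 1 = 491459820 / 824073141 := by
  simp only [expIntConv, expIntConvNum, expIntConvDen, eval_add, eval_mul, eval_pow, eval_X,
    eval_ofNat]
  norm_num

theorem expIntConv_nonneg {u : ℝ} (hu : 0 ≤ u) : 0 ≤ expIntConv u :=
  div_nonneg (expIntConvNum_nonneg hu) (hu.trans (le_expIntConvDen hu))

theorem expIntConv_le_inv {u : ℝ} (hu : 0 < u) : expIntConv u ≤ u⁻¹ := by
  rw [expIntConv, div_le_iff₀ (hu.trans_le (le_expIntConvDen hu.le)), ← div_eq_inv_mul,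
    le_div_iff₀ hu, mul_comm]
  exact mul_expIntConvNum_le hu.le

theorem setIntegral_exp_neg_div_Ioi_one_le :
    ∫ u in Ioi (1 : ℝ), exp (-u) / u ≤ 491459820 / 824073141 * exp (-1) := by
  rw [← expIntConv_one]
  have hsub : ∀ u : ℝ, expIntConv u - (expIntConv u - u⁻¹ - 144850083840000 /
      expIntConvDen.eval u ^ 2) = u⁻¹ + 144850083840000 / expIntConvDen.eval u ^ 2 :=
    fun u => by ring
  refine setIntegral_exp_neg_div_le_of_hasDerivAt
    (fun u hu => hasDerivAt_expIntConv (by linarith [hu.out]))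
    (fun u _ => by rw [hsub]; simp only [le_add_iff_nonneg_right]; positivity) ?_ ?_
  · simp only [hsub]
    refine ((integrableOn_exp_neg_Ioi 1).const_mul (1 + 144850083840000)).mono'
      (by fun_prop : Measurable fun u : ℝ =>
        (u⁻¹ + 144850083840000 / expIntConvDen.eval u ^ 2) * exp (-u)).aestronglyMeasurable ?_
    filter_upwards [ae_restrict_mem measurableSet_Ioi] with u (hu : 1 < u)
    have hD : 1 ≤ expIntConvDen.eval u := hu.le.trans (le_expIntConvDen (by linarith))
    rw [norm_mul, Real.norm_of_nonneg (exp_pos _).le, Real.norm_of_nonneg (by positivity)]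
    gcongr
    · exact inv_le_one_of_one_le₀ hu.le
    · exact div_le_self (by norm_num) (one_le_pow₀ hD)
  · refine tendsto_of_tendsto_of_tendsto_of_le_of_le' tendsto_const_nhds
      tendsto_exp_neg_atTop_nhds_zero ?_ ?_
    · filter_upwards [eventually_ge_atTop 0] with u hu
      exact mul_nonneg (expIntConv_nonneg hu) (exp_pos _).le
    · filter_upwards [eventually_ge_atTop 1] with u hu
      refine mul_le_of_le_one_left (exp_pos _).le ?_
      exact (expIntConv_le_inv (by linarith)).trans (inv_le_one_of_one_le₀ hu)

end ExpIntegral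

noncomputable def expDefect (u : ℝ) : ℝ := if u ≤ 1 then 1 - exp (-u) else exp (-u)

theorem expDefect_of_le {u : ℝ} (hu : u ≤ 1) : expDefect u = 1 - exp (-u) := if_pos hu

theorem expDefect_of_lt {u : ℝ} (hu : 1 < u) : expDefect u = exp (-u) := if_neg hu.not_ge

theorem expDefect_nonneg {u : ℝ} (hu : 0 ≤ u) : 0 ≤ expDefect u := by
  rcases le_or_gt u 1 with h | h
  · simp [expDefect_of_le h, hu]
  · simp [expDefect_of_lt h, (exp_pos _).le]

theorem integrableOn_expDefect : IntegrableOn expDefect (Ioi 0) := by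
  rw [← Ioc_union_Ioi_eq_Ioi zero_le_one]
  refine IntegrableOn.union ?_ ?_
  · exact (by fun_prop : Continuous fun u : ℝ => 1 - exp (-u)).integrableOn_Ioc.congr_fun
      (fun u hu => (expDefect_of_le hu.2).symm) measurableSet_Ioc
  · exact (integrableOn_exp_neg_Ioi 1).congr_fun (fun u hu => (expDefect_of_lt hu).symm)
      measurableSet_Ioi

theorem integrableOn_expDefect_div : IntegrableOn (fun u => expDefect u / u) (Ioi 0) := by
  rw [← Ioc_union_Ioi_eq_Ioi zero_le_one]
  refine IntegrableOn.union ?_ ?_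
  · exact (integrableOn_one_sub_exp_neg_div 1).congr_fun
      (fun u hu => by rw [expDefect_of_le hu.2]) measurableSet_Ioc
  · exact (integrableOn_exp_neg_div_Ioi one_pos).congr_fun
      (fun u hu => by rw [expDefect_of_lt hu]) measurableSet_Ioi

theorem integral_expDefect : ∫ u in Ioi 0, expDefect u = 2 * exp (-1) := by
  have h01 : ∫ u in (0 : ℝ)..1, expDefect u = ∫ u in (0 : ℝ)..1, (1 - exp (-u)) :=
    intervalIntegral.integral_congr fun u hu => expDefect_of_le (by simp_all)
  have h1 : ∫ u in Ioi 1, expDefect u = ∫ u in Ioi 1, exp (-u) :=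
    setIntegral_congr_fun measurableSet_Ioi fun u hu => expDefect_of_lt hu
  rw [← intervalIntegral.integral_interval_add_Ioi' (b := 1)
    ((intervalIntegrable_iff_integrableOn_Ioc_of_le zero_le_one).2
      (integrableOn_expDefect.mono_set Ioc_subset_Ioi_self))
    (integrableOn_expDefect.mono_set (Ioi_subset_Ioi zero_le_one)), h01, h1,
    integral_exp_neg_Ioi]
  rw [intervalIntegral.integral_sub intervalIntegrable_const
    ((by fun_prop : Continuous fun u => exp (-u)).intervalIntegrable _ _),
    intervalIntegral.integral_comp_neg (fun u => exp u)]
  simp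
  ring

theorem integral_expDefect_div_le : ∫ u in Ioi 0, expDefect u / u ≤ 1.016 := by
  have h01 : ∫ u in (0 : ℝ)..1, expDefect u / u = ∫ u in (0 : ℝ)..1, (1 - exp (-u)) / u :=
    intervalIntegral.integral_congr fun u hu => by rw [expDefect_of_le (by simp_all)]
  have h1 : ∫ u in Ioi 1, expDefect u / u = ∫ u in Ioi 1, exp (-u) / u :=
    setIntegral_congr_fun measurableSet_Ioi fun u hu => by rw [expDefect_of_lt hu]
  have he : exp (-1) < 1 / 2.7182818283 := by
    rw [exp_neg, ← one_div]
    exact one_div_lt_one_div_of_lt (by norm_num) exp_one_gt_d9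
  rw [← intervalIntegral.integral_interval_add_Ioi' (b := 1)
    ((intervalIntegrable_iff_integrableOn_Ioc_of_le zero_le_one).2
      (integrableOn_expDefect_div.mono_set Ioc_subset_Ioi_self))
    (integrableOn_expDefect_div.mono_set (Ioi_subset_Ioi zero_le_one)), h01, h1]
  have hEin := integral_one_sub_exp_neg_div_le 8
  norm_num [Finset.sum_range_succ, Nat.factorial] at hEin
  linarith [setIntegral_exp_neg_div_Ioi_one_le]

theorem abs_sin_mul_exp_neg_rpow_sub_indicator_le {p r : ℝ} (s : ℝ) (hp : 0 < p) (hr : 0 < r) :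
    |sin (s * r) * r * exp (-(r ^ p)) - (Ioc 0 1).indicator (fun r => sin (s * r) * r) r| ≤
      r * expDefect (r ^ p) := by
  have hsplit : |sin (s * r) * r * exp (-(r ^ p)) -
      (Ioc 0 1).indicator (fun r => sin (s * r) * r) r| =
        |sin (s * r)| * (r * expDefect (r ^ p)) := by
    rcases le_or_gt r 1 with h | h
    · rw [indicator_of_mem (show r ∈ Ioc 0 1 from ⟨hr, h⟩),
        expDefect_of_le (rpow_le_one hr.le h hp.le),
        show sin (s * r) * r * exp (-(r ^ p)) - sin (s * r) * r =
          -(sin (s * r) * (r * (1 - exp (-(r ^ p))))) by ring, abs_neg, abs_mul,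
        abs_of_nonneg (mul_nonneg hr.le (by simp [rpow_nonneg hr.le]))]
    · rw [indicator_of_notMem (fun hr' => h.not_ge hr'.2), expDefect_of_lt (one_lt_rpow h hp),
        sub_zero, mul_assoc, abs_mul, abs_of_nonneg (mul_nonneg hr.le (exp_pos _).le)]
  rw [hsplit]
  exact mul_le_of_le_one_left (mul_nonneg hr.le (expDefect_nonneg (rpow_nonneg hr.le p)))
    (abs_sin_le_one _)

theorem abs_integral_sub_integral_le {p : ℝ} (s : ℝ) (hp : 0 < p)
    (hint : IntegrableOn (fun r => r * expDefect (r ^ p)) (Ioi 0)) :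
    |(∫ r in Ioi 0, sin (s * r) * r * exp (-(r ^ p))) - ∫ r in (0 : ℝ)..1, sin (s * r) * r| ≤
      ∫ r in Ioi 0, r * expDefect (r ^ p) := by
  have hF : IntegrableOn (fun r => sin (s * r) * r * exp (-(r ^ p))) (Ioi 0) := by
    refine (integrableOn_rpow_mul_exp_neg_rpow (s := 1) (by norm_num) hp).mono'
      (by fun_prop : Measurable fun r : ℝ =>
        sin (s * r) * r * exp (-(r ^ p))).aestronglyMeasurable ?_
    filter_upwards [ae_restrict_mem measurableSet_Ioi] with r (hr : 0 < r)
    rw [rpow_one, norm_mul, norm_mul, Real.norm_of_nonneg hr.le,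
      Real.norm_of_nonneg (exp_pos _).le, mul_assoc]
    exact mul_le_of_le_one_left (by positivity) (abs_sin_le_one _)
  have hS : IntegrableOn ((Ioc 0 1).indicator fun r => sin (s * r) * r) (Ioi 0) :=
    ((integrable_indicator_iff measurableSet_Ioc).2
      (by fun_prop : Continuous fun r => sin (s * r) * r).integrableOn_Ioc).integrableOn
  have hind : ∫ r in Ioi 0, (Ioc 0 1).indicator (fun r => sin (s * r) * r) r =
      ∫ r in (0 : ℝ)..1, sin (s * r) * r := by
    rw [setIntegral_indicator measurableSet_Ioc, inter_eq_right.2 Ioc_subset_Ioi_self,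
      intervalIntegral.integral_of_le zero_le_one]
  rw [← hind, ← integral_sub hF hS, ← Real.norm_eq_abs]
  refine norm_integral_le_of_norm_le hint ?_
  filter_upwards [ae_restrict_mem measurableSet_Ioi] with r (hr : 0 < r)
  exact abs_sin_mul_exp_neg_rpow_sub_indicator_le s hp hr

theorem integrableOn_mul_expDefect_rpow {p : ℝ} (hp : 2 ≤ p) :
    IntegrableOn (fun r => r * expDefect (r ^ p)) (Ioi 0) := by
  have hp0 : 0 < p := by linarith
  have h := integrableOn_rpow_sub_one_mul integrableOn_expDefect integrableOn_expDefect_div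
    (by positivity : 0 ≤ 2 / p) ((div_le_one hp0).2 hp)
  rw [← one_add_one_eq_two] at h
  simpa using (integrableOn_Ioi_rpow_mul_comp_rpow_iff expDefect hp0.ne' 1).2 h

theorem integral_mul_expDefect_rpow_le {p : ℝ} (hp : 2 ≤ p) :
    ∫ r in Ioi 0, r * expDefect (r ^ p) ≤ 1.016 / p := by
  have hp0 : 0 < p := by linarith
  have ha1 : 2 / p ≤ 1 := (div_le_one hp0).2 hp
  calc ∫ r in Ioi 0, r * expDefect (r ^ p)
      = p⁻¹ * ∫ u in Ioi 0, u ^ (2 / p - 1) * expDefect u := by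
        simpa [one_add_one_eq_two] using integral_Ioi_rpow_mul_comp_rpow expDefect hp0 1
    _ ≤ p⁻¹ * ((1 - 2 / p) * (∫ u in Ioi 0, expDefect u / u) +
          2 / p * ∫ u in Ioi 0, expDefect u) := by
        gcongr
        exact setIntegral_rpow_sub_one_mul_le (fun u hu => expDefect_nonneg (le_of_lt hu))
          integrableOn_expDefect integrableOn_expDefect_div (by positivity) ha1
    _ ≤ p⁻¹ * ((1 - 2 / p) * 1.016 + 2 / p * 1.016) := by
        rw [integral_expDefect]
        gcongr
        · exact integral_expDefect_div_le
        · linarith [exp_neg_one_lt_half]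
    _ = 1.016 / p := by ring

theorem stmt11 (p s : ℝ) (hp : 2 ≤ p) (hs : 0 < s) :
    |(∫ r in Set.Ioi (0 : ℝ), Real.sin (s * r) * r * Real.exp (-(r ^ p))) -
        (Real.sin s - s * Real.cos s) / s ^ 2| ≤ 1.016 / p := by
  rw [← integral_sin_const_mul_mul_id hs.ne']
  exact (abs_integral_sub_integral_le s (by linarith)
    (integrableOn_mul_expDefect_rpow hp)).trans (integral_mul_expDefect_rpow_le hp)
end
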